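/- (Corollary 4) In the compound multinomial model, set S = S1 + S2. Then: (i) for all z ≥ 0, E[e^{−z·S}] = (1 − p + p1·E[e^{−z·Y1_1}] + p0·E[e^{−z·(Y3_1 + Y4_1)}] + p2·E[e^{−z·Y2_1}])^t; (ii) if the first moments are finite, E[S] = t·[p1·E[Y1_1] + p0·(E[Y3_1] + E[Y4_1]) + p2·E[Y2_1]]; (iii) if the second moments are finite, Var(S) = t·{p1·E[Y1_1^2] + p2·E[Y2_1^2] + p0·E[(Y3_1 + Y4_1)^2] − [p1·E[Y1_1] + p0·(E[Y3_1] + E[Y4_1]) + p2·E[Y2_1]]^2}. -/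

import Mathlib

open MeasureTheory ProbabilityTheory Finset

/-- `(B0, B1, B2)` has the multinomial distribution with parameters `t` and `(p0, p1, p2)`. -/
def IsMultinomial {Ω : Type*} [MeasureSpace Ω] (t : ℕ) (p0 p1 p2 : ℝ)
    (B0 B1 B2 : Ω → ℕ) : Prop :=
  Measurable B0 ∧ Measurable B1 ∧ Measurable B2 ∧
  ∀ b0 b1 b2 : ℕ,
    (ℙ {ω | B0 ω = b0 ∧ B1 ω = b1 ∧ B2 ω = b2}).toReal =
      if b0 + b1 + b2 ≤ t then
        (Nat.factorial t : ℝ) /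
          ((Nat.factorial b0 : ℝ) * (Nat.factorial b1 : ℝ) * (Nat.factorial b2 : ℝ) *
            (Nat.factorial (t - (b0 + b1 + b2)) : ℝ)) *
          (p0 ^ b0 * p1 ^ b1 * p2 ^ b2 * (1 - (p0 + p1 + p2)) ^ (t - (b0 + b1 + b2)))
      else 0

namespace CM14

def Fs (t : ℕ) : Finset (ℕ × ℕ × ℕ) :=
  ((range (t+1)) ×ˢ (range (t+1)) ×ˢ (range (t+1))).filter
    fun n => n.1 + n.2.1 + n.2.2 ≤ t

lemma mem_Fs {t : ℕ} {n : ℕ × ℕ × ℕ} : n ∈ Fs t ↔ n.1 + n.2.1 + n.2.2 ≤ t := by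
  simp only [Fs, mem_filter, mem_product, mem_range]
  omega

noncomputable def M (t : ℕ) (p0 p1 p2 : ℝ) (n : ℕ × ℕ × ℕ) : ℝ :=
  (Nat.factorial t : ℝ) /
      ((Nat.factorial n.1 : ℝ) * (Nat.factorial n.2.1 : ℝ) * (Nat.factorial n.2.2 : ℝ) *
        (Nat.factorial (t - (n.1 + n.2.1 + n.2.2)) : ℝ)) *
    (p0 ^ n.1 * p1 ^ n.2.1 * p2 ^ n.2.2 * (1 - (p0 + p1 + p2)) ^ (t - (n.1 + n.2.1 + n.2.2)))

lemma kci (t : ℕ) (p0 p1 p2 x0 x1 x2 : ℝ) :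
    ∑ n ∈ Fs t, M t p0 p1 p2 n * (x0 ^ n.1 * x1 ^ n.2.1 * x2 ^ n.2.2) =
      ((1 - (p0 + p1 + p2)) + (p0 * x0 + p1 * x1 + p2 * x2)) ^ t := by
  classical
  set q : ℝ := 1 - (p0 + p1 + p2) with hq
  have hrhs : ((q) + (p0 * x0 + p1 * x1 + p2 * x2)) ^ t
      = (∑ i : Fin 4, (![q, p0 * x0, p1 * x1, p2 * x2]) i) ^ t := by
    rw [Fin.sum_univ_four]
    norm_num [add_assoc]
    rfl
  rw [hrhs, Finset.sum_pow_eq_sum_piAntidiag]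
  refine Finset.sum_nbij' (i := fun n => ![t - (n.1 + n.2.1 + n.2.2), n.1, n.2.1, n.2.2])
    (j := fun k => (k 1, k 2, k 3)) ?_ ?_ ?_ ?_ ?_
  · intro n hn
    rw [Finset.mem_piAntidiag]
    have hs := mem_Fs.1 hn
    constructor
    · rw [Fin.sum_univ_four]
      simp only [Matrix.cons_val_zero, Matrix.cons_val_one, Matrix.head_cons,
        Matrix.cons_val_two, Matrix.tail_cons, Matrix.cons_val_three]
      omega
    · intro i _; exact Finset.mem_univ i
  · intro k hk
    rw [Finset.mem_piAntidiag] at hk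
    have hs : k 0 + k 1 + k 2 + k 3 = t := by
      have := hk.1; rwa [Fin.sum_univ_four] at this
    exact mem_Fs.2 (by simp; omega)
  · intro n _; rfl
  · intro k hk
    rw [Finset.mem_piAntidiag] at hk
    have hs : k 0 + k 1 + k 2 + k 3 = t := by
      have := hk.1; rwa [Fin.sum_univ_four] at this
    funext i
    fin_cases i <;> simp <;> omega
  · intro n hn
    have hsn := mem_Fs.1 hn
    have hmult : (Nat.multinomial Finset.univ
        (![t - (n.1 + n.2.1 + n.2.2), n.1, n.2.1, n.2.2]) : ℝ) =
        (t.factorial : ℝ) / ((n.1.factorial : ℝ) * (n.2.1.factorial : ℝ) * (n.2.2.factorial : ℝ) *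
          ((t - (n.1 + n.2.1 + n.2.2)).factorial : ℝ)) := by
      set k : Fin 4 → ℕ := ![t - (n.1 + n.2.1 + n.2.2), n.1, n.2.1, n.2.2] with hkdef
      have hspec := Nat.multinomial_spec Finset.univ k
      have hprod : (∏ i : Fin 4, (k i).factorial) = (k 0).factorial * (k 1).factorial *
          (k 2).factorial * (k 3).factorial := by rw [Fin.prod_univ_four]
      have hsum : (∑ i : Fin 4, k i) = t := by
        rw [Fin.sum_univ_four]
        simp only [hkdef, Matrix.cons_val_zero, Matrix.cons_val_one, Matrix.head_cons,
          Matrix.cons_val_two, Matrix.tail_cons, Matrix.cons_val_three]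
        omega
      rw [hprod, hsum] at hspec
      have hk0 : k 0 = t - (n.1 + n.2.1 + n.2.2) := rfl
      have hk1 : k 1 = n.1 := rfl
      have hk2 : k 2 = n.2.1 := rfl
      have hk3 : k 3 = n.2.2 := rfl
      rw [hk0, hk1, hk2, hk3] at hspec
      rw [eq_div_iff (by positivity)]
      have := congrArg (fun m : ℕ => (m : ℝ)) hspec
      push_cast at this ⊢
      nlinarith [this]
    simp only [M]
    rw [Fin.prod_univ_four, hmult]
    simp only [Matrix.cons_val_zero, Matrix.cons_val_one, Matrix.head_cons,
      Matrix.cons_val_two, Matrix.tail_cons, Matrix.cons_val_three]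
    ring


lemma Mcore1 (t b0 c b2 : ℕ) (p0 p1 p2 : ℝ) :
    ((c : ℝ) + 1) * M (t+1) p0 p1 p2 (b0, c+1, b2)
      = ((t : ℝ) + 1) * p1 * M t p0 p1 p2 (b0, c, b2) := by
  have hr : (t+1) - (b0 + (c+1) + b2) = t - (b0 + c + b2) := by omega
  simp only [M, hr, Nat.factorial_succ]
  have h0 : (b0.factorial : ℝ) ≠ 0 := Nat.cast_ne_zero.2 (Nat.factorial_ne_zero _)
  have h1 : (c.factorial : ℝ) ≠ 0 := Nat.cast_ne_zero.2 (Nat.factorial_ne_zero _)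
  have h2 : (b2.factorial : ℝ) ≠ 0 := Nat.cast_ne_zero.2 (Nat.factorial_ne_zero _)
  have h3 : ((t - (b0 + c + b2)).factorial : ℝ) ≠ 0 := Nat.cast_ne_zero.2 (Nat.factorial_ne_zero _)
  have hc : ((c : ℝ) + 1) ≠ 0 := by positivity
  push_cast
  field_simp
  ring

lemma Mcore0 (t b c b2 : ℕ) (p0 p1 p2 : ℝ) :
    ((c : ℝ) + 1) * M (t+1) p0 p1 p2 (c+1, b, b2)
      = ((t : ℝ) + 1) * p0 * M t p0 p1 p2 (c, b, b2) := by
  have hr : (t+1) - ((c+1) + b + b2) = t - (c + b + b2) := by omega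
  simp only [M, hr, Nat.factorial_succ]
  have h0 : (b.factorial : ℝ) ≠ 0 := Nat.cast_ne_zero.2 (Nat.factorial_ne_zero _)
  have h1 : (c.factorial : ℝ) ≠ 0 := Nat.cast_ne_zero.2 (Nat.factorial_ne_zero _)
  have h2 : (b2.factorial : ℝ) ≠ 0 := Nat.cast_ne_zero.2 (Nat.factorial_ne_zero _)
  have h3 : ((t - (c + b + b2)).factorial : ℝ) ≠ 0 := Nat.cast_ne_zero.2 (Nat.factorial_ne_zero _)
  have hc : ((c : ℝ) + 1) ≠ 0 := by positivity
  push_cast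
  field_simp
  ring

lemma Mcore2 (t b0 b c : ℕ) (p0 p1 p2 : ℝ) :
    ((c : ℝ) + 1) * M (t+1) p0 p1 p2 (b0, b, c+1)
      = ((t : ℝ) + 1) * p2 * M t p0 p1 p2 (b0, b, c) := by
  have hr : (t+1) - (b0 + b + (c+1)) = t - (b0 + b + c) := by omega
  simp only [M, hr, Nat.factorial_succ]
  have h0 : (b0.factorial : ℝ) ≠ 0 := Nat.cast_ne_zero.2 (Nat.factorial_ne_zero _)
  have h1 : (c.factorial : ℝ) ≠ 0 := Nat.cast_ne_zero.2 (Nat.factorial_ne_zero _)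
  have h2 : (b.factorial : ℝ) ≠ 0 := Nat.cast_ne_zero.2 (Nat.factorial_ne_zero _)
  have h3 : ((t - (b0 + b + c)).factorial : ℝ) ≠ 0 := Nat.cast_ne_zero.2 (Nat.factorial_ne_zero _)
  have hc : ((c : ℝ) + 1) ≠ 0 := by positivity
  push_cast
  field_simp
  ring

lemma shift1 (t : ℕ) (p0 p1 p2 : ℝ) (g : ℕ × ℕ × ℕ → ℝ) :
    ∑ n ∈ Fs (t+1), (n.2.1 : ℝ) * M (t+1) p0 p1 p2 n * g n
      = ((t : ℝ) + 1) * p1 * ∑ m ∈ Fs t, M t p0 p1 p2 m * g (m.1, m.2.1 + 1, m.2.2) := by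
  classical
  rw [Finset.mul_sum]
  rw [← Finset.sum_filter_of_ne (p := fun n => n.2.1 ≠ 0)
    (f := fun n => (n.2.1 : ℝ) * M (t+1) p0 p1 p2 n * g n)
    (by intro x _ hx h0; exact hx (by simp [h0]))]
  refine Finset.sum_nbij' (i := fun n => (n.1, n.2.1 - 1, n.2.2))
    (j := fun m => (m.1, m.2.1 + 1, m.2.2)) ?_ ?_ ?_ ?_ ?_
  · intro n hn
    simp only [mem_filter, mem_Fs] at hn ⊢
    omega
  · intro m hm
    simp only [mem_filter, mem_Fs] at hm ⊢
    omega
  · intro n hn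
    simp only [mem_filter, mem_Fs] at hn
    obtain ⟨n1, n2, n3⟩ := n
    simp only at hn
    have h : n2 - 1 + 1 = n2 := by omega
    simp [h]
  · intro m _
    simp
  · intro n hn
    simp only [mem_filter, mem_Fs] at hn
    obtain ⟨b0, b1, b2⟩ := n
    obtain ⟨c, rfl⟩ : ∃ c, b1 = c + 1 := ⟨b1 - 1, by simp at hn; omega⟩
    have key := Mcore1 t b0 c b2 p0 p1 p2
    simp only [Nat.add_sub_cancel]
    push_cast
    calc ((c : ℝ) + 1) * M (t+1) p0 p1 p2 (b0, c+1, b2) * g (b0, c+1, b2)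
        = (((t:ℝ)+1) * p1 * M t p0 p1 p2 (b0, c, b2)) * g (b0, c+1, b2) := by rw [key]
      _ = ((t:ℝ)+1) * p1 * (M t p0 p1 p2 (b0, c, b2) * g (b0, c+1, b2)) := by ring

lemma shift0 (t : ℕ) (p0 p1 p2 : ℝ) (g : ℕ × ℕ × ℕ → ℝ) :
    ∑ n ∈ Fs (t+1), (n.1 : ℝ) * M (t+1) p0 p1 p2 n * g n
      = ((t : ℝ) + 1) * p0 * ∑ m ∈ Fs t, M t p0 p1 p2 m * g (m.1 + 1, m.2.1, m.2.2) := by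
  classical
  rw [Finset.mul_sum]
  rw [← Finset.sum_filter_of_ne (p := fun n => n.1 ≠ 0)
    (f := fun n => (n.1 : ℝ) * M (t+1) p0 p1 p2 n * g n)
    (by intro x _ hx h0; exact hx (by simp [h0]))]
  refine Finset.sum_nbij' (i := fun n => (n.1 - 1, n.2.1, n.2.2))
    (j := fun m => (m.1 + 1, m.2.1, m.2.2)) ?_ ?_ ?_ ?_ ?_
  · intro n hn
    simp only [mem_filter, mem_Fs] at hn ⊢
    omega
  · intro m hm
    simp only [mem_filter, mem_Fs] at hm ⊢
    omega
  · intro n hn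
    simp only [mem_filter, mem_Fs] at hn
    obtain ⟨n1, n2, n3⟩ := n
    simp only at hn
    have h : n1 - 1 + 1 = n1 := by omega
    simp [h]
  · intro m _
    simp
  · intro n hn
    simp only [mem_filter, mem_Fs] at hn
    obtain ⟨b1, b, b2⟩ := n
    obtain ⟨c, rfl⟩ : ∃ c, b1 = c + 1 := ⟨b1 - 1, by simp at hn; omega⟩
    have key := Mcore0 t b c b2 p0 p1 p2
    simp only [Nat.add_sub_cancel]
    push_cast
    calc ((c : ℝ) + 1) * M (t+1) p0 p1 p2 (c+1, b, b2) * g (c+1, b, b2)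
        = (((t:ℝ)+1) * p0 * M t p0 p1 p2 (c, b, b2)) * g (c+1, b, b2) := by rw [key]
      _ = ((t:ℝ)+1) * p0 * (M t p0 p1 p2 (c, b, b2) * g (c+1, b, b2)) := by ring

lemma shift2 (t : ℕ) (p0 p1 p2 : ℝ) (g : ℕ × ℕ × ℕ → ℝ) :
    ∑ n ∈ Fs (t+1), (n.2.2 : ℝ) * M (t+1) p0 p1 p2 n * g n
      = ((t : ℝ) + 1) * p2 * ∑ m ∈ Fs t, M t p0 p1 p2 m * g (m.1, m.2.1, m.2.2 + 1) := by
  classical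
  rw [Finset.mul_sum]
  rw [← Finset.sum_filter_of_ne (p := fun n => n.2.2 ≠ 0)
    (f := fun n => (n.2.2 : ℝ) * M (t+1) p0 p1 p2 n * g n)
    (by intro x _ hx h0; exact hx (by simp [h0]))]
  refine Finset.sum_nbij' (i := fun n => (n.1, n.2.1, n.2.2 - 1))
    (j := fun m => (m.1, m.2.1, m.2.2 + 1)) ?_ ?_ ?_ ?_ ?_
  · intro n hn
    simp only [mem_filter, mem_Fs] at hn ⊢
    omega
  · intro m hm
    simp only [mem_filter, mem_Fs] at hm ⊢
    omega
  · intro n hn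
    simp only [mem_filter, mem_Fs] at hn
    obtain ⟨n1, n2, n3⟩ := n
    simp only at hn
    have h : n3 - 1 + 1 = n3 := by omega
    simp [h]
  · intro m _
    simp
  · intro n hn
    simp only [mem_filter, mem_Fs] at hn
    obtain ⟨b0, b, b1⟩ := n
    obtain ⟨c, rfl⟩ : ∃ c, b1 = c + 1 := ⟨b1 - 1, by simp at hn; omega⟩
    have key := Mcore2 t b0 b c p0 p1 p2
    simp only [Nat.add_sub_cancel]
    push_cast
    calc ((c : ℝ) + 1) * M (t+1) p0 p1 p2 (b0, b, c+1) * g (b0, b, c+1)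
        = (((t:ℝ)+1) * p2 * M t p0 p1 p2 (b0, b, c)) * g (b0, b, c+1) := by rw [key]
      _ = ((t:ℝ)+1) * p2 * (M t p0 p1 p2 (b0, b, c) * g (b0, b, c+1)) := by ring

variable {p0 p1 p2 : ℝ}

lemma sumM (t : ℕ) (p0 p1 p2 : ℝ) : ∑ n ∈ Fs t, M t p0 p1 p2 n = 1 := by
  have h := kci t p0 p1 p2 1 1 1
  simp only [one_pow, mul_one] at h
  rw [h]
  norm_num

lemma mom1_1 (t : ℕ) (p0 p1 p2 : ℝ) :
    ∑ n ∈ Fs t, (n.2.1 : ℝ) * M t p0 p1 p2 n = (t : ℝ) * p1 := by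
  cases t with
  | zero =>
    rw [Finset.sum_eq_zero]
    · simp
    · intro n hn
      have h := mem_Fs.1 hn
      have h2 : n.2.1 = 0 := by omega
      simp [h2]
  | succ s =>
    calc ∑ n ∈ Fs (s+1), (n.2.1 : ℝ) * M (s+1) p0 p1 p2 n
        = ∑ n ∈ Fs (s+1), (n.2.1 : ℝ) * M (s+1) p0 p1 p2 n * (fun _ => (1:ℝ)) n := by
          simp
      _ = ((s:ℝ)+1) * p1 * ∑ m ∈ Fs s, M s p0 p1 p2 m * (fun _ => (1:ℝ)) (m.1, m.2.1+1, m.2.2) :=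
          shift1 s p0 p1 p2 _
      _ = (((s+1 : ℕ)):ℝ) * p1 := by simp [sumM]

lemma mom1_0 (t : ℕ) (p0 p1 p2 : ℝ) :
    ∑ n ∈ Fs t, (n.1 : ℝ) * M t p0 p1 p2 n = (t : ℝ) * p0 := by
  cases t with
  | zero =>
    rw [Finset.sum_eq_zero]
    · simp
    · intro n hn
      have h := mem_Fs.1 hn
      have h2 : n.1 = 0 := by omega
      simp [h2]
  | succ s =>
    calc ∑ n ∈ Fs (s+1), (n.1 : ℝ) * M (s+1) p0 p1 p2 n
        = ∑ n ∈ Fs (s+1), (n.1 : ℝ) * M (s+1) p0 p1 p2 n * (fun _ => (1:ℝ)) n := by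
          simp
      _ = ((s:ℝ)+1) * p0 * ∑ m ∈ Fs s, M s p0 p1 p2 m * (fun _ => (1:ℝ)) (m.1+1, m.2.1, m.2.2) :=
          shift0 s p0 p1 p2 _
      _ = (((s+1 : ℕ)):ℝ) * p0 := by simp [sumM]

lemma mom1_2 (t : ℕ) (p0 p1 p2 : ℝ) :
    ∑ n ∈ Fs t, (n.2.2 : ℝ) * M t p0 p1 p2 n = (t : ℝ) * p2 := by
  cases t with
  | zero =>
    rw [Finset.sum_eq_zero]
    · simp
    · intro n hn
      have h := mem_Fs.1 hn
      have h2 : n.2.2 = 0 := by omega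
      simp [h2]
  | succ s =>
    calc ∑ n ∈ Fs (s+1), (n.2.2 : ℝ) * M (s+1) p0 p1 p2 n
        = ∑ n ∈ Fs (s+1), (n.2.2 : ℝ) * M (s+1) p0 p1 p2 n * (fun _ => (1:ℝ)) n := by
          simp
      _ = ((s:ℝ)+1) * p2 * ∑ m ∈ Fs s, M s p0 p1 p2 m * (fun _ => (1:ℝ)) (m.1, m.2.1, m.2.2+1) :=
          shift2 s p0 p1 p2 _
      _ = (((s+1 : ℕ)):ℝ) * p2 := by simp [sumM]

lemma mom2_11 (t : ℕ) (p0 p1 p2 : ℝ) :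
    ∑ n ∈ Fs t, (n.2.1 : ℝ) * M t p0 p1 p2 n * (n.2.1 : ℝ)
      = (t : ℝ) * p1 * (((t : ℝ) - 1) * p1 + 1) := by
  cases t with
  | zero =>
    rw [Finset.sum_eq_zero]
    · simp
    · intro n hn
      have h := mem_Fs.1 hn
      have h2 : n.2.1 = 0 := by omega
      simp [h2]
  | succ s =>
    rw [shift1 s p0 p1 p2 (fun n => (n.2.1 : ℝ))]
    have h2 : ∑ m ∈ Fs s, M s p0 p1 p2 m * ((fun n : ℕ × ℕ × ℕ => (n.2.1 : ℝ)) (m.1, m.2.1+1, m.2.2))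
        = ∑ m ∈ Fs s, (M s p0 p1 p2 m * (m.2.1:ℝ) + M s p0 p1 p2 m) := by
      refine Finset.sum_congr rfl fun m _ => ?_
      push_cast
      ring
    rw [h2, Finset.sum_add_distrib, sumM]
    have h3 : ∑ m ∈ Fs s, M s p0 p1 p2 m * (m.2.1:ℝ)
        = ∑ m ∈ Fs s, (m.2.1:ℝ) * M s p0 p1 p2 m := by
      refine Finset.sum_congr rfl fun m _ => by ring
    rw [h3, mom1_1]
    push_cast
    ring

lemma mom2_00 (t : ℕ) (p0 p1 p2 : ℝ) :
    ∑ n ∈ Fs t, (n.1 : ℝ) * M t p0 p1 p2 n * (n.1 : ℝ)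
      = (t : ℝ) * p0 * (((t : ℝ) - 1) * p0 + 1) := by
  cases t with
  | zero =>
    rw [Finset.sum_eq_zero]
    · simp
    · intro n hn
      have h := mem_Fs.1 hn
      have h2 : n.1 = 0 := by omega
      simp [h2]
  | succ s =>
    rw [shift0 s p0 p1 p2 (fun n => (n.1 : ℝ))]
    have h2 : ∑ m ∈ Fs s, M s p0 p1 p2 m * ((fun n : ℕ × ℕ × ℕ => (n.1 : ℝ)) (m.1+1, m.2.1, m.2.2))
        = ∑ m ∈ Fs s, (M s p0 p1 p2 m * (m.1:ℝ) + M s p0 p1 p2 m) := by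
      refine Finset.sum_congr rfl fun m _ => ?_
      push_cast
      ring
    rw [h2, Finset.sum_add_distrib, sumM]
    have h3 : ∑ m ∈ Fs s, M s p0 p1 p2 m * (m.1:ℝ)
        = ∑ m ∈ Fs s, (m.1:ℝ) * M s p0 p1 p2 m := by
      refine Finset.sum_congr rfl fun m _ => by ring
    rw [h3, mom1_0]
    push_cast
    ring

lemma mom2_22 (t : ℕ) (p0 p1 p2 : ℝ) :
    ∑ n ∈ Fs t, (n.2.2 : ℝ) * M t p0 p1 p2 n * (n.2.2 : ℝ)
      = (t : ℝ) * p2 * (((t : ℝ) - 1) * p2 + 1) := by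
  cases t with
  | zero =>
    rw [Finset.sum_eq_zero]
    · simp
    · intro n hn
      have h := mem_Fs.1 hn
      have h2 : n.2.2 = 0 := by omega
      simp [h2]
  | succ s =>
    rw [shift2 s p0 p1 p2 (fun n => (n.2.2 : ℝ))]
    have h2 : ∑ m ∈ Fs s, M s p0 p1 p2 m * ((fun n : ℕ × ℕ × ℕ => (n.2.2 : ℝ)) (m.1, m.2.1, m.2.2+1))
        = ∑ m ∈ Fs s, (M s p0 p1 p2 m * (m.2.2:ℝ) + M s p0 p1 p2 m) := by
      refine Finset.sum_congr rfl fun m _ => ?_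
      push_cast
      ring
    rw [h2, Finset.sum_add_distrib, sumM]
    have h3 : ∑ m ∈ Fs s, M s p0 p1 p2 m * (m.2.2:ℝ)
        = ∑ m ∈ Fs s, (m.2.2:ℝ) * M s p0 p1 p2 m := by
      refine Finset.sum_congr rfl fun m _ => by ring
    rw [h3, mom1_2]
    push_cast
    ring

lemma mom2_10 (t : ℕ) (p0 p1 p2 : ℝ) :
    ∑ n ∈ Fs t, (n.2.1 : ℝ) * M t p0 p1 p2 n * (n.1 : ℝ)
      = (t : ℝ) * ((t : ℝ) - 1) * p1 * p0 := by
  cases t with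
  | zero =>
    rw [Finset.sum_eq_zero]
    · simp
    · intro n hn
      have h := mem_Fs.1 hn
      have h2 : n.2.1 = 0 := by omega
      simp [h2]
  | succ s =>
    rw [shift1 s p0 p1 p2 (fun n => (n.1 : ℝ))]
    have h3 : ∑ m ∈ Fs s, M s p0 p1 p2 m * ((fun n : ℕ × ℕ × ℕ => (n.1 : ℝ)) (m.1, m.2.1+1, m.2.2))
        = ∑ m ∈ Fs s, (m.1:ℝ) * M s p0 p1 p2 m := by
      refine Finset.sum_congr rfl fun m _ => by push_cast; ring
    rw [h3, mom1_0]
    push_cast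
    ring

lemma mom2_12 (t : ℕ) (p0 p1 p2 : ℝ) :
    ∑ n ∈ Fs t, (n.2.1 : ℝ) * M t p0 p1 p2 n * (n.2.2 : ℝ)
      = (t : ℝ) * ((t : ℝ) - 1) * p1 * p2 := by
  cases t with
  | zero =>
    rw [Finset.sum_eq_zero]
    · simp
    · intro n hn
      have h := mem_Fs.1 hn
      have h2 : n.2.1 = 0 := by omega
      simp [h2]
  | succ s =>
    rw [shift1 s p0 p1 p2 (fun n => (n.2.2 : ℝ))]
    have h3 : ∑ m ∈ Fs s, M s p0 p1 p2 m * ((fun n : ℕ × ℕ × ℕ => (n.2.2 : ℝ)) (m.1, m.2.1+1, m.2.2))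
        = ∑ m ∈ Fs s, (m.2.2:ℝ) * M s p0 p1 p2 m := by
      refine Finset.sum_congr rfl fun m _ => by push_cast; ring
    rw [h3, mom1_2]
    push_cast
    ring

lemma mom2_02 (t : ℕ) (p0 p1 p2 : ℝ) :
    ∑ n ∈ Fs t, (n.1 : ℝ) * M t p0 p1 p2 n * (n.2.2 : ℝ)
      = (t : ℝ) * ((t : ℝ) - 1) * p0 * p2 := by
  cases t with
  | zero =>
    rw [Finset.sum_eq_zero]
    · simp
    · intro n hn
      have h := mem_Fs.1 hn
      have h2 : n.1 = 0 := by omega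
      simp [h2]
  | succ s =>
    rw [shift0 s p0 p1 p2 (fun n => (n.2.2 : ℝ))]
    have h3 : ∑ m ∈ Fs s, M s p0 p1 p2 m * ((fun n : ℕ × ℕ × ℕ => (n.2.2 : ℝ)) (m.1+1, m.2.1, m.2.2))
        = ∑ m ∈ Fs s, (m.2.2:ℝ) * M s p0 p1 p2 m := by
      refine Finset.sum_congr rfl fun m _ => by push_cast; ring
    rw [h3, mom1_2]
    push_cast
    ring

lemma lin (t : ℕ) (p0 p1 p2 a0 a1 a2 : ℝ) :
    ∑ n ∈ Fs t, M t p0 p1 p2 n * ((n.1 : ℝ) * a0 + (n.2.1 : ℝ) * a1 + (n.2.2 : ℝ) * a2)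
      = (t : ℝ) * (p0 * a0 + p1 * a1 + p2 * a2) := by
  have expand : ∀ n ∈ Fs t, M t p0 p1 p2 n * ((n.1 : ℝ) * a0 + (n.2.1 : ℝ) * a1 + (n.2.2 : ℝ) * a2)
      = a0 * ((n.1 : ℝ) * M t p0 p1 p2 n) + a1 * ((n.2.1 : ℝ) * M t p0 p1 p2 n)
        + a2 * ((n.2.2 : ℝ) * M t p0 p1 p2 n) := fun n _ => by ring
  rw [Finset.sum_congr rfl expand]
  simp only [Finset.sum_add_distrib, ← Finset.mul_sum]
  rw [mom1_0, mom1_1, mom1_2]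
  ring

lemma quad (t : ℕ) (p0 p1 p2 a0 a1 a2 : ℝ) :
    ∑ n ∈ Fs t, M t p0 p1 p2 n * ((n.1 : ℝ) * a0 + (n.2.1 : ℝ) * a1 + (n.2.2 : ℝ) * a2) ^ 2
      = (t : ℝ) * ((t : ℝ) - 1) * (p0 * a0 + p1 * a1 + p2 * a2) ^ 2
        + (t : ℝ) * (p0 * a0 ^ 2 + p1 * a1 ^ 2 + p2 * a2 ^ 2) := by
  have expand : ∀ n ∈ Fs t,
      M t p0 p1 p2 n * ((n.1 : ℝ) * a0 + (n.2.1 : ℝ) * a1 + (n.2.2 : ℝ) * a2) ^ 2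
      = a0 ^ 2 * ((n.1 : ℝ) * M t p0 p1 p2 n * (n.1 : ℝ))
        + a1 ^ 2 * ((n.2.1 : ℝ) * M t p0 p1 p2 n * (n.2.1 : ℝ))
        + a2 ^ 2 * ((n.2.2 : ℝ) * M t p0 p1 p2 n * (n.2.2 : ℝ))
        + (2 * a0 * a1) * ((n.2.1 : ℝ) * M t p0 p1 p2 n * (n.1 : ℝ))
        + (2 * a0 * a2) * ((n.1 : ℝ) * M t p0 p1 p2 n * (n.2.2 : ℝ))
        + (2 * a1 * a2) * ((n.2.1 : ℝ) * M t p0 p1 p2 n * (n.2.2 : ℝ)) := fun n _ => by ring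
  rw [Finset.sum_congr rfl expand]
  simp only [Finset.sum_add_distrib, ← Finset.mul_sum]
  rw [mom2_00, mom2_11, mom2_22, mom2_10, mom2_02, mom2_12]
  ring



lemma integral_partition {Ω : Type*} [MeasureSpace Ω] [IsProbabilityMeasure (ℙ : Measure Ω)]
    {ι : Type*} (F : Finset ι) (A : ι → Set Ω) (hA : ∀ n ∈ F, MeasurableSet (A n))
    (G : Ω → ℝ) (Gn : ι → Ω → ℝ)
    (hInd : ∀ n ∈ F, IndepFun ((A n).indicator (fun _ => (1:ℝ))) (Gn n) ℙ)
    (hInt : ∀ n ∈ F, Integrable (Gn n) ℙ)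
    (hrep : G =ᵐ[ℙ] fun ω => ∑ n ∈ F, (A n).indicator (Gn n) ω) :
    Integrable G ℙ ∧ ∫ ω, G ω ∂ℙ = ∑ n ∈ F, (ℙ (A n)).toReal * ∫ ω, Gn n ω ∂ℙ := by
  have hint_ind : ∀ n ∈ F, Integrable ((A n).indicator (Gn n)) ℙ := fun n hn =>
    (hInt n hn).indicator (hA n hn)
  have hintsum : Integrable (fun ω => ∑ n ∈ F, (A n).indicator (Gn n) ω) ℙ :=
    integrable_finset_sum F hint_ind
  refine ⟨hintsum.congr hrep.symm, ?_⟩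
  rw [integral_congr_ae hrep, integral_finset_sum F hint_ind]
  refine Finset.sum_congr rfl fun n hn => ?_
  have heq : (A n).indicator (Gn n) =
      fun ω => ((A n).indicator (fun _ => (1:ℝ)) ω) * Gn n ω := by
    funext ω
    by_cases h : ω ∈ A n <;> simp [Set.indicator_apply, h]
  rw [heq, (hInd n hn).integral_fun_mul_eq_mul_integral
    ((measurable_const.indicator (hA n hn)).aestronglyMeasurable)
    (hInt n hn).aestronglyMeasurable]
  congr 1
  have : ((A n).indicator fun _ => (1:ℝ)) = (A n).indicator (1 : Ω → ℝ) := rfl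
  rw [this, MeasureTheory.integral_indicator_one (hA n hn)]
  rfl

lemma integral_indep_prod {Ω : Type*} [MeasureSpace Ω] [IsProbabilityMeasure (ℙ : Measure Ω)]
    {ι : Type*} (f : ι → Ω → ℝ)
    (hind : iIndepFun f ℙ)
    (hmeas : ∀ i, Measurable (f i)) (s : Finset ι) :
    ∫ ω, ∏ i ∈ s, f i ω ∂ℙ = ∏ i ∈ s, ∫ ω, f i ω ∂ℙ := by
  classical
  induction s using Finset.cons_induction with
  | empty => simp
  | cons a s ha ih =>
    simp only [Finset.prod_cons]
    have hIndep : IndepFun (f a) (∏ j ∈ s, f j) ℙ :=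
      (hind.indepFun_finset_prod_of_notMem hmeas ha).symm
    have hprodmeas : Measurable (∏ j ∈ s, f j) := by
      have : (∏ j ∈ s, f j) = fun ω => ∏ j ∈ s, f j ω := by
        funext ω; simp
      rw [this]
      exact Finset.measurable_prod s fun j _ => hmeas j
    have hmul := hIndep.integral_mul_eq_mul_integral (hmeas a).aestronglyMeasurable
      hprodmeas.aestronglyMeasurable
    have h1 : (f a * ∏ j ∈ s, f j) = fun ω => f a ω * ∏ i ∈ s, f i ω := by
      funext ω; simp
    have h2 : integral ℙ (∏ j ∈ s, f j) = ∫ ω, ∏ i ∈ s, f i ω ∂ℙ := by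
      congr 1; funext ω; simp
    rw [h1, h2] at hmul
    rw [hmul, ih]

end CM14

open CM14 in
/-- Corollary 4: the LST, the mean and the variance of the total claim
amount `S = S1 + S2` in the compound multinomial model. -/
theorem lst_mean_variance_of_total_claim_amount
    {Ω : Type*} [MeasureSpace Ω] [IsProbabilityMeasure (ℙ : Measure Ω)]
    (t : ℕ) (p0 p1 p2 : ℝ) (hp0 : 0 ≤ p0) (hp1 : 0 ≤ p1) (hp2 : 0 ≤ p2)
    (hp : p0 + p1 + p2 ≤ 1)
    (B0 B1 B2 : Ω → ℕ) (hmult : IsMultinomial t p0 p1 p2 B0 B1 B2)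
    (Y1 Y2 Y3 Y4 : ℕ → Ω → ℝ)
    (hmeas : ∀ i, Measurable (Y1 i) ∧ Measurable (Y2 i) ∧ Measurable (Y3 i) ∧ Measurable (Y4 i))
    (hpos : ∀ i, (∀ᵐ ω ∂ℙ, 0 < Y1 i ω) ∧ (∀ᵐ ω ∂ℙ, 0 < Y2 i ω) ∧
      (∀ᵐ ω ∂ℙ, 0 < Y3 i ω) ∧ (∀ᵐ ω ∂ℙ, 0 < Y4 i ω))
    (hid1 : ∀ i, IdentDistrib (Y1 i) (Y1 0) ℙ ℙ)
    (hid2 : ∀ i, IdentDistrib (Y2 i) (Y2 0) ℙ ℙ)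
    (hid34 : ∀ i, IdentDistrib (fun ω => (Y3 i ω, Y4 i ω)) (fun ω => (Y3 0 ω, Y4 0 ω)) ℙ ℙ)
    (hindep : iIndepFun
      (fun i : Option (ℕ ⊕ ℕ ⊕ ℕ) => (match i with
        | none => fun ω => ((B0 ω : ℝ), (B1 ω : ℝ), (B2 ω : ℝ))
        | some (.inl i) => fun ω => (Y1 i ω, 0, 0)
        | some (.inr (.inl i)) => fun ω => (Y2 i ω, 0, 0)
        | some (.inr (.inr i)) => fun ω => (Y3 i ω, Y4 i ω, 0) : Ω → ℝ × ℝ × ℝ)) ℙ) :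
    (∀ z : ℝ, 0 ≤ z →
      (∫ ω, Real.exp (-z *
          ((∑ i ∈ Finset.range (B1 ω), Y1 i ω + ∑ i ∈ Finset.range (B0 ω), Y3 i ω) +
           (∑ i ∈ Finset.range (B2 ω), Y2 i ω + ∑ i ∈ Finset.range (B0 ω), Y4 i ω))) ∂ℙ) =
        (1 - (p0 + p1 + p2) + p1 * (∫ ω, Real.exp (-z * Y1 0 ω) ∂ℙ)
          + p0 * (∫ ω, Real.exp (-z * (Y3 0 ω + Y4 0 ω)) ∂ℙ)
          + p2 * (∫ ω, Real.exp (-z * Y2 0 ω) ∂ℙ)) ^ t) ∧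
    (Integrable (Y1 0) ℙ → Integrable (Y2 0) ℙ → Integrable (Y3 0) ℙ → Integrable (Y4 0) ℙ →
      (∫ ω, ((∑ i ∈ Finset.range (B1 ω), Y1 i ω + ∑ i ∈ Finset.range (B0 ω), Y3 i ω) +
             (∑ i ∈ Finset.range (B2 ω), Y2 i ω + ∑ i ∈ Finset.range (B0 ω), Y4 i ω)) ∂ℙ) =
        t * (p1 * (∫ ω, Y1 0 ω ∂ℙ) + p0 * ((∫ ω, Y3 0 ω ∂ℙ) + (∫ ω, Y4 0 ω ∂ℙ))
          + p2 * (∫ ω, Y2 0 ω ∂ℙ))) ∧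
    (Integrable (fun ω => Y1 0 ω ^ 2) ℙ → Integrable (fun ω => Y2 0 ω ^ 2) ℙ →
     Integrable (fun ω => Y3 0 ω ^ 2) ℙ → Integrable (fun ω => Y4 0 ω ^ 2) ℙ →
      variance (fun ω =>
          (∑ i ∈ Finset.range (B1 ω), Y1 i ω + ∑ i ∈ Finset.range (B0 ω), Y3 i ω) +
          (∑ i ∈ Finset.range (B2 ω), Y2 i ω + ∑ i ∈ Finset.range (B0 ω), Y4 i ω)) ℙ =
        t * (p1 * (∫ ω, Y1 0 ω ^ 2 ∂ℙ) + p2 * (∫ ω, Y2 0 ω ^ 2 ∂ℙ)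
          + p0 * (∫ ω, (Y3 0 ω + Y4 0 ω) ^ 2 ∂ℙ)
          - (p1 * (∫ ω, Y1 0 ω ∂ℙ) + p0 * ((∫ ω, Y3 0 ω ∂ℙ) + (∫ ω, Y4 0 ω ∂ℙ))
              + p2 * (∫ ω, Y2 0 ω ∂ℙ)) ^ 2)) := by
  classical
  obtain ⟨hB0, hB1, hB2, hpmf⟩ := hmult
  -- the family of random vectors
  set X : Option (ℕ ⊕ ℕ ⊕ ℕ) → Ω → ℝ × ℝ × ℝ :=
    (fun i : Option (ℕ ⊕ ℕ ⊕ ℕ) => (match i with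
        | none => fun ω => ((B0 ω : ℝ), (B1 ω : ℝ), (B2 ω : ℝ))
        | some (.inl i) => fun ω => (Y1 i ω, 0, 0)
        | some (.inr (.inl i)) => fun ω => (Y2 i ω, 0, 0)
        | some (.inr (.inr i)) => fun ω => (Y3 i ω, Y4 i ω, 0) : Ω → ℝ × ℝ × ℝ)) with hXdef
  have hXmeas : ∀ i, Measurable (X i) := by
    rintro (_ | (i | i | i))
    · exact (measurable_from_top.comp hB0).prodMk
        ((measurable_from_top.comp hB1).prodMk (measurable_from_top.comp hB2))
    · exact (hmeas i).1.prodMk (measurable_const.prodMk measurable_const)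
    · exact (hmeas i).2.1.prodMk (measurable_const.prodMk measurable_const)
    · exact (hmeas i).2.2.1.prodMk ((hmeas i).2.2.2.prodMk measurable_const)
  -- the scalar family
  set Z : Option (ℕ ⊕ ℕ ⊕ ℕ) → Ω → ℝ :=
    fun j => (fun x : ℝ × ℝ × ℝ => x.1 + x.2.1) ∘ X j with hZdef
  have hZindep : iIndepFun Z ℙ :=
    hindep.comp _ fun _ => measurable_fst.add (measurable_fst.comp measurable_snd)
  have hZmeas : ∀ j, Measurable (Z j) :=
    fun j => (measurable_fst.add (measurable_fst.comp measurable_snd)).comp (hXmeas j)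
  have hZ1 : ∀ i, Z (some (Sum.inl i)) = Y1 i := fun i => funext fun ω => add_zero _
  have hZ2 : ∀ i, Z (some (Sum.inr (Sum.inl i))) = Y2 i := fun i => funext fun ω => add_zero _
  have hZ34 : ∀ i, Z (some (Sum.inr (Sum.inr i))) = fun ω => Y3 i ω + Y4 i ω :=
    fun i => rfl
  -- index sets
  set Tn : ℕ × ℕ × ℕ → Finset (Option (ℕ ⊕ ℕ ⊕ ℕ)) := fun n =>
    ((range n.2.1).image (fun i => (some (Sum.inl i) : Option (ℕ ⊕ ℕ ⊕ ℕ)))) ∪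
    ((range n.2.2).image (fun i => (some (Sum.inr (Sum.inl i)) : Option (ℕ ⊕ ℕ ⊕ ℕ)))) ∪
    ((range n.1).image (fun i => (some (Sum.inr (Sum.inr i)) : Option (ℕ ⊕ ℕ ⊕ ℕ)))) with hTndef
  have hnone : ∀ n, none ∉ Tn n := by intro n; simp [hTndef]
  have hd12 : ∀ n : ℕ × ℕ × ℕ, Disjoint
      ((range n.2.1).image (fun i => (some (Sum.inl i) : Option (ℕ ⊕ ℕ ⊕ ℕ))))
      ((range n.2.2).image (fun i => (some (Sum.inr (Sum.inl i)) : Option (ℕ ⊕ ℕ ⊕ ℕ)))) := by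
    intro n
    simp only [Finset.disjoint_left, Finset.mem_image]
    rintro a ⟨i, _, rfl⟩ ⟨j, _, h⟩
    simp at h
  have hd3 : ∀ n : ℕ × ℕ × ℕ, Disjoint
      (((range n.2.1).image (fun i => (some (Sum.inl i) : Option (ℕ ⊕ ℕ ⊕ ℕ)))) ∪
        ((range n.2.2).image (fun i => (some (Sum.inr (Sum.inl i)) : Option (ℕ ⊕ ℕ ⊕ ℕ)))))
      ((range n.1).image (fun i => (some (Sum.inr (Sum.inr i)) : Option (ℕ ⊕ ℕ ⊕ ℕ)))) := by
    intro n
    simp only [Finset.disjoint_left, Finset.mem_union, Finset.mem_image]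
    rintro a (⟨i, _, rfl⟩ | ⟨i, _, rfl⟩) ⟨j, _, h⟩ <;> simp at h
  -- the conditional sums
  set Sn : ℕ × ℕ × ℕ → Ω → ℝ := fun n ω =>
    (∑ i ∈ Finset.range n.2.1, Y1 i ω + ∑ i ∈ Finset.range n.1, Y3 i ω) +
    (∑ i ∈ Finset.range n.2.2, Y2 i ω + ∑ i ∈ Finset.range n.1, Y4 i ω) with hSndef
  have hSnmeas : ∀ n, Measurable (Sn n) := by
    intro n
    exact ((Finset.measurable_sum _ fun i _ => (hmeas i).1).add
        (Finset.measurable_sum _ fun i _ => (hmeas i).2.2.1)).add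
      ((Finset.measurable_sum _ fun i _ => (hmeas i).2.1).add
        (Finset.measurable_sum _ fun i _ => (hmeas i).2.2.2))
  have hSnZ : ∀ n ω, Sn n ω = ∑ j ∈ Tn n, Z j ω := by
    intro n ω
    rw [hTndef]
    rw [Finset.sum_union (hd3 n), Finset.sum_union (hd12 n)]
    rw [Finset.sum_image (fun a _ b _ h => by simpa using h),
        Finset.sum_image (fun a _ b _ h => by simpa using h),
        Finset.sum_image (fun a _ b _ h => by simpa using h)]
    simp only [hZ1, hZ2]
    have h34 : ∑ i ∈ Finset.range n.1, Z (some (Sum.inr (Sum.inr i))) ω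
        = ∑ i ∈ Finset.range n.1, (Y3 i ω + Y4 i ω) := by
      refine Finset.sum_congr rfl fun i _ => by rw [hZ34]
    rw [h34, Finset.sum_add_distrib]
    simp only [hSndef]
    ring
  -- the partition events
  set A : ℕ × ℕ × ℕ → Set Ω := fun n =>
    {ω | B0 ω = n.1 ∧ B1 ω = n.2.1 ∧ B2 ω = n.2.2} with hAdef
  have hAmeas : ∀ n, MeasurableSet (A n) := by
    intro n
    have : A n = B0 ⁻¹' {n.1} ∩ (B1 ⁻¹' {n.2.1} ∩ B2 ⁻¹' {n.2.2}) := rfl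
    rw [this]
    exact (hB0 (measurableSet_singleton _)).inter
      ((hB1 (measurableSet_singleton _)).inter (hB2 (measurableSet_singleton _)))
  have hPn : ∀ n ∈ Fs t, (ℙ (A n)).toReal = M t p0 p1 p2 n := by
    intro n hn
    have := hpmf n.1 n.2.1 n.2.2
    rw [if_pos (mem_Fs.1 hn)] at this
    exact this
  have hnull : ∀ n : ℕ × ℕ × ℕ, n ∉ Fs t → ℙ (A n) = 0 := by
    intro n hn
    have h := hpmf n.1 n.2.1 n.2.2
    rw [if_neg (fun hc => hn (mem_Fs.2 hc))] at h
    rcases (ENNReal.toReal_eq_zero_iff _).1 h with h | h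
    · exact h
    · exact absurd h (measure_ne_top _ _)
  have haeF : ∀ᵐ ω ∂ℙ, (B0 ω, B1 ω, B2 ω) ∈ Fs t := by
    rw [MeasureTheory.ae_iff]
    refine measure_mono_null (fun ω hω => ?_)
      ((MeasureTheory.measure_biUnion_null_iff (Set.to_countable
        {n : ℕ × ℕ × ℕ | n ∉ Fs t})).2 (fun n hn => hnull n hn))
    simp only [Set.mem_setOf_eq] at hω
    exact Set.mem_biUnion hω ⟨rfl, rfl, rfl⟩
  -- generic a.e. representation over the partition
  have hrep : ∀ (G : Ω → ℝ) (Gn : ℕ × ℕ × ℕ → Ω → ℝ),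
      (∀ ω, G ω = Gn (B0 ω, B1 ω, B2 ω) ω) →
      G =ᵐ[ℙ] fun ω => ∑ n ∈ Fs t, (A n).indicator (Gn n) ω := by
    intro G Gn hG
    filter_upwards [haeF] with ω hω
    rw [hG ω, Finset.sum_eq_single_of_mem (B0 ω, B1 ω, B2 ω) hω (fun m hm hne =>
      Set.indicator_of_notMem (fun hmem => hne (by
        obtain ⟨h1, h2, h3⟩ := hmem
        obtain ⟨m1, m2, m3⟩ := m
        simp only at h1 h2 h3
        simp [h1, h2, h3])) _)]
    rw [Set.indicator_of_mem (show ω ∈ A (B0 ω, B1 ω, B2 ω) from ⟨rfl, rfl, rfl⟩)]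
  -- independence of the indicator and functions of the conditional sums
  have hIndFin : ∀ (n : ℕ × ℕ × ℕ) (g : ℝ → ℝ), Measurable g →
      IndepFun ((A n).indicator (fun _ => (1:ℝ))) (fun ω => g (Sn n ω)) ℙ := by
    intro n g hg
    have hdisj : Disjoint ({none} : Finset (Option (ℕ ⊕ ℕ ⊕ ℕ))) (Tn n) := by
      rw [Finset.disjoint_left]
      intro a ha
      rw [Finset.mem_singleton] at ha
      subst ha
      exact hnone n
    have hbase := hindep.indepFun_finset {none} (Tn n) hdisj hXmeas
    set pt : ℝ × ℝ × ℝ := ((n.1 : ℝ), (n.2.1 : ℝ), (n.2.2 : ℝ)) with hptdef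
    have hmemnone : (none : Option (ℕ ⊕ ℕ ⊕ ℕ)) ∈ ({none} : Finset (Option (ℕ ⊕ ℕ ⊕ ℕ))) :=
      Finset.mem_singleton_self _
    set φ : (({x // x ∈ ({none} : Finset (Option (ℕ ⊕ ℕ ⊕ ℕ)))}) → ℝ × ℝ × ℝ) → ℝ :=
      fun v => Set.indicator {pt} (fun _ => (1:ℝ)) (v ⟨none, hmemnone⟩) with hφdef
    set ψ : (({x // x ∈ Tn n}) → ℝ × ℝ × ℝ) → ℝ :=
      fun v => g (∑ j ∈ (Tn n).attach, ((v j).1 + (v j).2.1)) with hψdef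
    have hφm : Measurable φ :=
      (measurable_const.indicator (measurableSet_singleton pt)).comp (measurable_pi_apply _)
    have hψm : Measurable ψ := hg.comp (Finset.measurable_sum _ fun j _ =>
      ((measurable_pi_apply j).fst).add (((measurable_pi_apply j).snd).fst))
    have hcomp := hbase.comp hφm hψm
    have hleft : (φ ∘ fun ω (i : {x // x ∈ ({none} : Finset (Option (ℕ ⊕ ℕ ⊕ ℕ)))}) => X i ω)
        = (A n).indicator (fun _ => (1:ℝ)) := by
      funext ω
      simp only [Function.comp_apply, hφdef]
      by_cases h : ω ∈ A n
      · rw [Set.indicator_of_mem h, Set.indicator_of_mem]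
        obtain ⟨h1, h2, h3⟩ := h
        simp only [Set.mem_singleton_iff, hptdef]
        simp [hXdef, h1, h2, h3]
      · rw [Set.indicator_of_notMem h, Set.indicator_of_notMem]
        intro hc
        simp only [Set.mem_singleton_iff, hptdef, hXdef, Prod.mk.injEq] at hc
        exact h ⟨Nat.cast_injective hc.1, Nat.cast_injective hc.2.1, Nat.cast_injective hc.2.2⟩
    have hright : (ψ ∘ fun ω (j : {x // x ∈ Tn n}) => X j ω)
        = fun ω => g (Sn n ω) := by
      funext ω
      simp only [Function.comp_apply, hψdef]
      congr 1
      rw [hSnZ n ω, ← Finset.sum_attach (Tn n) (fun j => Z j ω)]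
      rfl
    rw [hleft, hright] at hcomp
    exact hcomp
  -- nonnegativity
  have hSnnn : ∀ᵐ ω ∂ℙ, ∀ n : ℕ × ℕ × ℕ, 0 ≤ Sn n ω := by
    have h1 : ∀ᵐ ω ∂ℙ, ∀ i, 0 ≤ Y1 i ω := ae_all_iff.2 fun i => ((hpos i).1).mono fun ω h => h.le
    have h2 : ∀ᵐ ω ∂ℙ, ∀ i, 0 ≤ Y2 i ω :=
      ae_all_iff.2 fun i => ((hpos i).2.1).mono fun ω h => h.le
    have h3 : ∀ᵐ ω ∂ℙ, ∀ i, 0 ≤ Y3 i ω :=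
      ae_all_iff.2 fun i => ((hpos i).2.2.1).mono fun ω h => h.le
    have h4 : ∀ᵐ ω ∂ℙ, ∀ i, 0 ≤ Y4 i ω :=
      ae_all_iff.2 fun i => ((hpos i).2.2.2).mono fun ω h => h.le
    filter_upwards [h1, h2, h3, h4] with ω g1 g2 g3 g4
    intro n
    exact add_nonneg
      (add_nonneg (Finset.sum_nonneg fun i _ => g1 i) (Finset.sum_nonneg fun i _ => g3 i))
      (add_nonneg (Finset.sum_nonneg fun i _ => g2 i) (Finset.sum_nonneg fun i _ => g4 i))
  have hid3 : ∀ i, IdentDistrib (Y3 i) (Y3 0) ℙ ℙ := fun i => (hid34 i).comp measurable_fst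
  have hid4 : ∀ i, IdentDistrib (Y4 i) (Y4 0) ℙ ℙ := fun i => (hid34 i).comp measurable_snd
  have hSnintAll : Integrable (Y1 0) ℙ → Integrable (Y2 0) ℙ → Integrable (Y3 0) ℙ →
      Integrable (Y4 0) ℙ → ∀ n, Integrable (Sn n) ℙ := by
    intro int1 int2 int3 int4 n
    exact (((integrable_finset_sum _ (fun i (_ : i ∈ Finset.range n.2.1) =>
            (hid1 i).integrable_iff.2 int1)).add
          (integrable_finset_sum _ (fun i (_ : i ∈ Finset.range n.1) =>
            (hid3 i).integrable_iff.2 int3))).add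
        ((integrable_finset_sum _ (fun i (_ : i ∈ Finset.range n.2.2) =>
            (hid2 i).integrable_iff.2 int2)).add
          (integrable_finset_sum _ (fun i (_ : i ∈ Finset.range n.1) =>
            (hid4 i).integrable_iff.2 int4))))
  have hESnAll : Integrable (Y1 0) ℙ → Integrable (Y2 0) ℙ → Integrable (Y3 0) ℙ →
      Integrable (Y4 0) ℙ → ∀ n : ℕ × ℕ × ℕ, ∫ ω, Sn n ω ∂ℙ =
        (n.1 : ℝ) * ((∫ ω, Y3 0 ω ∂ℙ) + (∫ ω, Y4 0 ω ∂ℙ))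
          + (n.2.1 : ℝ) * (∫ ω, Y1 0 ω ∂ℙ) + (n.2.2 : ℝ) * (∫ ω, Y2 0 ω ∂ℙ) := by
    intro int1 int2 int3 int4
    have hESn : ∀ n : ℕ × ℕ × ℕ, ∫ ω, Sn n ω ∂ℙ =
        (n.1 : ℝ) * ((∫ ω, Y3 0 ω ∂ℙ) + (∫ ω, Y4 0 ω ∂ℙ))
          + (n.2.1 : ℝ) * (∫ ω, Y1 0 ω ∂ℙ) + (n.2.2 : ℝ) * (∫ ω, Y2 0 ω ∂ℙ) := by
      intro n
      have i1 : Integrable (fun ω => ∑ i ∈ Finset.range n.2.1, Y1 i ω) ℙ :=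
        integrable_finset_sum _ (fun i _ => (hid1 i).integrable_iff.2 int1)
      have i3 : Integrable (fun ω => ∑ i ∈ Finset.range n.1, Y3 i ω) ℙ :=
        integrable_finset_sum _ (fun i _ => (hid3 i).integrable_iff.2 int3)
      have i2 : Integrable (fun ω => ∑ i ∈ Finset.range n.2.2, Y2 i ω) ℙ :=
        integrable_finset_sum _ (fun i _ => (hid2 i).integrable_iff.2 int2)
      have i4 : Integrable (fun ω => ∑ i ∈ Finset.range n.1, Y4 i ω) ℙ :=
        integrable_finset_sum _ (fun i _ => (hid4 i).integrable_iff.2 int4)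
      have this : ∫ ω, Sn n ω ∂ℙ = (∫ ω, ∑ i ∈ Finset.range n.2.1, Y1 i ω ∂ℙ
          + ∫ ω, ∑ i ∈ Finset.range n.1, Y3 i ω ∂ℙ)
          + (∫ ω, ∑ i ∈ Finset.range n.2.2, Y2 i ω ∂ℙ
          + ∫ ω, ∑ i ∈ Finset.range n.1, Y4 i ω ∂ℙ) := by
        calc ∫ ω, Sn n ω ∂ℙ
            = integral ℙ (((fun ω => ∑ i ∈ Finset.range n.2.1, Y1 i ω)
                + (fun ω => ∑ i ∈ Finset.range n.1, Y3 i ω))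
              + ((fun ω => ∑ i ∈ Finset.range n.2.2, Y2 i ω)
                + (fun ω => ∑ i ∈ Finset.range n.1, Y4 i ω))) := rfl
          _ = _ := by
              rw [integral_add' (i1.add i3) (i2.add i4), integral_add' i1 i3, integral_add' i2 i4]
      rw [this, integral_finset_sum _ (fun i _ => (hid1 i).integrable_iff.2 int1),
        integral_finset_sum _ (fun i _ => (hid3 i).integrable_iff.2 int3),
        integral_finset_sum _ (fun i _ => (hid2 i).integrable_iff.2 int2),
        integral_finset_sum _ (fun i _ => (hid4 i).integrable_iff.2 int4),
        Finset.sum_congr rfl (fun i (_ : i ∈ Finset.range n.2.1) => (hid1 i).integral_eq),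
        Finset.sum_congr rfl (fun i (_ : i ∈ Finset.range n.1) => (hid3 i).integral_eq),
        Finset.sum_congr rfl (fun i (_ : i ∈ Finset.range n.2.2) => (hid2 i).integral_eq),
        Finset.sum_congr rfl (fun i (_ : i ∈ Finset.range n.1) => (hid4 i).integral_eq),
        Finset.sum_const, Finset.sum_const, Finset.sum_const, Finset.sum_const,
        Finset.card_range, Finset.card_range, Finset.card_range, nsmul_eq_mul, nsmul_eq_mul,
        nsmul_eq_mul, nsmul_eq_mul]
      ring
    exact hESn
  have hmeanAll : Integrable (Y1 0) ℙ → Integrable (Y2 0) ℙ → Integrable (Y3 0) ℙ →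
      Integrable (Y4 0) ℙ →
      (∫ ω, ((∑ i ∈ Finset.range (B1 ω), Y1 i ω + ∑ i ∈ Finset.range (B0 ω), Y3 i ω) +
             (∑ i ∈ Finset.range (B2 ω), Y2 i ω + ∑ i ∈ Finset.range (B0 ω), Y4 i ω)) ∂ℙ) =
        t * (p1 * (∫ ω, Y1 0 ω ∂ℙ) + p0 * ((∫ ω, Y3 0 ω ∂ℙ) + (∫ ω, Y4 0 ω ∂ℙ))
          + p2 * (∫ ω, Y2 0 ω ∂ℙ)) := by
    intro int1 int2 int3 int4
    have hSnint : ∀ n, Integrable (Sn n) ℙ := hSnintAll int1 int2 int3 int4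
    have hSnint : ∀ n, Integrable (Sn n) ℙ := hSnintAll int1 int2 int3 int4
    have hESn := hESnAll int1 int2 int3 int4
    have hpart := integral_partition (Fs t) A (fun n _ => hAmeas n)
      (fun ω => ((∑ i ∈ Finset.range (B1 ω), Y1 i ω + ∑ i ∈ Finset.range (B0 ω), Y3 i ω) +
             (∑ i ∈ Finset.range (B2 ω), Y2 i ω + ∑ i ∈ Finset.range (B0 ω), Y4 i ω)))
      Sn
      (fun n _ => hIndFin n id measurable_id)
      (fun n _ => hSnint n)
      (hrep _ _ (fun ω => rfl))
    rw [hpart.2]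
    rw [Finset.sum_congr rfl (fun n hn => by rw [hPn n hn, hESn n]),
      lin t p0 p1 p2 ((∫ ω, Y3 0 ω ∂ℙ) + (∫ ω, Y4 0 ω ∂ℙ)) (∫ ω, Y1 0 ω ∂ℙ)
        (∫ ω, Y2 0 ω ∂ℙ)]
    ring
  refine ⟨?_, ?_, ?_⟩
  · -- Part (i): the LST
    intro z hz
    have hgm : Measurable fun x : ℝ => Real.exp (-z * x) :=
      Real.measurable_exp.comp (measurable_id.const_mul (-z))
    have hGnint : ∀ n, Integrable (fun ω => Real.exp (-z * Sn n ω)) ℙ := by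
      intro n
      refine (integrable_const (1:ℝ)).mono' (hgm.comp (hSnmeas n)).aestronglyMeasurable ?_
      filter_upwards [hSnnn] with ω hω
      rw [Real.norm_eq_abs, Real.abs_exp]
      have hle : -z * Sn n ω ≤ 0 := by
        have := mul_nonneg hz (hω n)
        linarith
      calc Real.exp (-z * Sn n ω) ≤ Real.exp 0 := Real.exp_le_exp.2 hle
        _ = 1 := Real.exp_zero
    have hpart := integral_partition (Fs t) A (fun n _ => hAmeas n)
      (fun ω => Real.exp (-z *
          ((∑ i ∈ Finset.range (B1 ω), Y1 i ω + ∑ i ∈ Finset.range (B0 ω), Y3 i ω) +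
           (∑ i ∈ Finset.range (B2 ω), Y2 i ω + ∑ i ∈ Finset.range (B0 ω), Y4 i ω))))
      (fun n ω => Real.exp (-z * Sn n ω))
      (fun n _ => hIndFin n _ hgm)
      (fun n _ => hGnint n)
      (hrep _ _ (fun ω => rfl))
    rw [hpart.2]
    have hcond : ∀ n ∈ Fs t, ∫ ω, Real.exp (-z * Sn n ω) ∂ℙ =
        (∫ ω, Real.exp (-z * (Y3 0 ω + Y4 0 ω)) ∂ℙ) ^ n.1 *
        (∫ ω, Real.exp (-z * Y1 0 ω) ∂ℙ) ^ n.2.1 *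
        (∫ ω, Real.exp (-z * Y2 0 ω) ∂ℙ) ^ n.2.2 := by
      intro n _
      have hptw : (fun ω => Real.exp (-z * Sn n ω))
          = fun ω => ∏ j ∈ Tn n, ((fun x => Real.exp (-z * x)) ∘ Z j) ω := by
        funext ω
        rw [hSnZ n ω, Finset.mul_sum, Real.exp_sum]
        rfl
      rw [hptw, integral_indep_prod _
        (hZindep.comp (fun _ => fun x => Real.exp (-z * x)) (fun _ => hgm))
        (fun j => hgm.comp (hZmeas j)) (Tn n)]
      have hTnn : Tn n =
          ((range n.2.1).image (fun i => (some (Sum.inl i) : Option (ℕ ⊕ ℕ ⊕ ℕ)))) ∪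
          ((range n.2.2).image (fun i => (some (Sum.inr (Sum.inl i)) : Option (ℕ ⊕ ℕ ⊕ ℕ)))) ∪
          ((range n.1).image (fun i => (some (Sum.inr (Sum.inr i)) : Option (ℕ ⊕ ℕ ⊕ ℕ)))) := rfl
      rw [hTnn, Finset.prod_union (hd3 n), Finset.prod_union (hd12 n),
          Finset.prod_image (fun a _ b _ h => by simpa using h),
          Finset.prod_image (fun a _ b _ h => by simpa using h),
          Finset.prod_image (fun a _ b _ h => by simpa using h)]
      have f1 : ∀ i : ℕ, (∫ ω, ((fun x => Real.exp (-z * x)) ∘ Z (some (Sum.inl i))) ω ∂ℙ)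
          = ∫ ω, Real.exp (-z * Y1 0 ω) ∂ℙ := by
        intro i
        rw [hZ1 i]
        exact ((hid1 i).comp hgm).integral_eq
      have f2 : ∀ i : ℕ, (∫ ω, ((fun x => Real.exp (-z * x)) ∘ Z (some (Sum.inr (Sum.inl i)))) ω ∂ℙ)
          = ∫ ω, Real.exp (-z * Y2 0 ω) ∂ℙ := by
        intro i
        rw [hZ2 i]
        exact ((hid2 i).comp hgm).integral_eq
      have f34 : ∀ i : ℕ, (∫ ω, ((fun x => Real.exp (-z * x)) ∘ Z (some (Sum.inr (Sum.inr i)))) ω ∂ℙ)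
          = ∫ ω, Real.exp (-z * (Y3 0 ω + Y4 0 ω)) ∂ℙ := by
        intro i
        rw [hZ34 i]
        have hu : Measurable fun p : ℝ × ℝ => Real.exp (-z * (p.1 + p.2)) :=
          Real.measurable_exp.comp ((measurable_fst.add measurable_snd).const_mul (-z))
        exact ((hid34 i).comp hu).integral_eq
      rw [Finset.prod_congr rfl (fun i _ => f1 i), Finset.prod_congr rfl (fun i _ => f2 i),
          Finset.prod_congr rfl (fun i _ => f34 i)]
      rw [Finset.prod_const, Finset.prod_const, Finset.prod_const,
          Finset.card_range, Finset.card_range, Finset.card_range]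
      ring
    rw [Finset.sum_congr rfl (fun n hn => by rw [hPn n hn, hcond n hn])]
    rw [kci t p0 p1 p2 (∫ ω, Real.exp (-z * (Y3 0 ω + Y4 0 ω)) ∂ℙ)
      (∫ ω, Real.exp (-z * Y1 0 ω) ∂ℙ) (∫ ω, Real.exp (-z * Y2 0 ω) ∂ℙ)]
    congr 1
    ring
  · exact hmeanAll
  · -- Part (iii): the variance
    intro sq1 sq2 sq3 sq4
    have hY3m : Measurable (Y3 0) := (hmeas 0).2.2.1
    have hY4m : Measurable (Y4 0) := (hmeas 0).2.2.2
    have sq34 : Integrable (fun ω => (Y3 0 ω + Y4 0 ω) ^ 2) ℙ := by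
      refine ((sq3.const_mul 2).add (sq4.const_mul 2)).mono'
        ((hY3m.add hY4m).pow_const 2).aestronglyMeasurable ?_
      filter_upwards with ω
      rw [Real.norm_eq_abs, abs_of_nonneg (sq_nonneg _)]
      simp only [Pi.add_apply]
      nlinarith [sq_nonneg (Y3 0 ω - Y4 0 ω)]
    have m1 : MemLp (Y1 0) 2 ℙ :=
      (memLp_two_iff_integrable_sq (hmeas 0).1.aestronglyMeasurable).2 sq1
    have m2 : MemLp (Y2 0) 2 ℙ :=
      (memLp_two_iff_integrable_sq (hmeas 0).2.1.aestronglyMeasurable).2 sq2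
    have m34 : MemLp (fun ω => Y3 0 ω + Y4 0 ω) 2 ℙ :=
      (memLp_two_iff_integrable_sq (hY3m.add hY4m).aestronglyMeasurable).2 sq34
    have m3 : MemLp (Y3 0) 2 ℙ := (memLp_two_iff_integrable_sq hY3m.aestronglyMeasurable).2 sq3
    have m4 : MemLp (Y4 0) 2 ℙ := (memLp_two_iff_integrable_sq hY4m.aestronglyMeasurable).2 sq4
    have int1 : Integrable (Y1 0) ℙ := m1.integrable one_le_two
    have int2 : Integrable (Y2 0) ℙ := m2.integrable one_le_two
    have int3 : Integrable (Y3 0) ℙ := m3.integrable one_le_two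
    have int4 : Integrable (Y4 0) ℙ := m4.integrable one_le_two
    -- ℒ² bounds for all indices
    have mZ1 : ∀ i, MemLp (Y1 i) 2 ℙ := fun i =>
      (memLp_two_iff_integrable_sq (hmeas i).1.aestronglyMeasurable).2
        (((hid1 i).comp (measurable_id.pow_const 2)).integrable_iff.2 sq1)
    have mZ2 : ∀ i, MemLp (Y2 i) 2 ℙ := fun i =>
      (memLp_two_iff_integrable_sq (hmeas i).2.1.aestronglyMeasurable).2
        (((hid2 i).comp (measurable_id.pow_const 2)).integrable_iff.2 sq2)
    have mZ34 : ∀ i, MemLp (fun ω => Y3 i ω + Y4 i ω) 2 ℙ := fun i =>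
      (memLp_two_iff_integrable_sq
          ((hmeas i).2.2.1.add (hmeas i).2.2.2).aestronglyMeasurable).2
        (((hid34 i).comp ((measurable_fst.add measurable_snd).pow_const 2)).integrable_iff.2 sq34)
    have hTnn : ∀ n : ℕ × ℕ × ℕ, Tn n =
        ((range n.2.1).image (fun i => (some (Sum.inl i) : Option (ℕ ⊕ ℕ ⊕ ℕ)))) ∪
        ((range n.2.2).image (fun i => (some (Sum.inr (Sum.inl i)) : Option (ℕ ⊕ ℕ ⊕ ℕ)))) ∪
        ((range n.1).image (fun i => (some (Sum.inr (Sum.inr i)) : Option (ℕ ⊕ ℕ ⊕ ℕ)))) :=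
      fun n => rfl
    have hZmem : ∀ n : ℕ × ℕ × ℕ, ∀ j ∈ Tn n, MemLp (Z j) 2 ℙ := by
      intro n j hj
      rw [hTnn n] at hj
      simp only [Finset.mem_union, Finset.mem_image, Finset.mem_range] at hj
      rcases hj with ((⟨i, _, rfl⟩ | ⟨i, _, rfl⟩) | ⟨i, _, rfl⟩)
      · rw [hZ1 i]; exact mZ1 i
      · rw [hZ2 i]; exact mZ2 i
      · rw [hZ34 i]; exact mZ34 i
    have hSnfun : ∀ n : ℕ × ℕ × ℕ, Sn n = fun ω => ∑ j ∈ Tn n, Z j ω :=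
      fun n => funext (hSnZ n)
    have hSnmem : ∀ n, MemLp (Sn n) 2 ℙ := by
      intro n
      rw [hSnfun n]
      exact memLp_finset_sum (Tn n) (hZmem n)
    -- variance of the conditional sums
    have hVarSn : ∀ n : ℕ × ℕ × ℕ, variance (Sn n) ℙ =
        (n.1 : ℝ) * variance (fun ω => Y3 0 ω + Y4 0 ω) ℙ
          + (n.2.1 : ℝ) * variance (Y1 0) ℙ + (n.2.2 : ℝ) * variance (Y2 0) ℙ := by
      intro n
      have hsum : variance (Sn n) ℙ = ∑ j ∈ Tn n, variance (Z j) ℙ := by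
        have hps : (∑ j ∈ Tn n, Z j) = Sn n := by
          funext ω
          rw [Finset.sum_apply, hSnZ n ω]
        rw [← hps]
        exact IndepFun.variance_sum (hZmem n)
          (fun i _ j _ hij => hZindep.indepFun hij)
      have c1 : ∀ i : ℕ, variance (Z (some (Sum.inl i))) ℙ = variance (Y1 0) ℙ := by
        intro i; rw [hZ1 i]; exact (hid1 i).variance_eq
      have c2 : ∀ i : ℕ, variance (Z (some (Sum.inr (Sum.inl i)))) ℙ = variance (Y2 0) ℙ := by
        intro i; rw [hZ2 i]; exact (hid2 i).variance_eq
      have c34 : ∀ i : ℕ, variance (Z (some (Sum.inr (Sum.inr i)))) ℙ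
          = variance (fun ω => Y3 0 ω + Y4 0 ω) ℙ := by
        intro i; rw [hZ34 i]
        exact ((hid34 i).comp (measurable_fst.add measurable_snd)).variance_eq
      rw [hsum, hTnn n, Finset.sum_union (hd3 n), Finset.sum_union (hd12 n),
          Finset.sum_image (fun a _ b _ h => by simpa using h),
          Finset.sum_image (fun a _ b _ h => by simpa using h),
          Finset.sum_image (fun a _ b _ h => by simpa using h),
          Finset.sum_congr rfl (fun i (_ : i ∈ Finset.range n.2.1) => c1 i),
          Finset.sum_congr rfl (fun i (_ : i ∈ Finset.range n.2.2) => c2 i),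
          Finset.sum_congr rfl (fun i (_ : i ∈ Finset.range n.1) => c34 i),
          Finset.sum_const, Finset.sum_const, Finset.sum_const,
          Finset.card_range, Finset.card_range, Finset.card_range,
          nsmul_eq_mul, nsmul_eq_mul, nsmul_eq_mul]
      ring
    have hESn := hESnAll int1 int2 int3 int4
    -- second moment of the conditional sums
    have hpow : ∀ (W : Ω → ℝ), integral ℙ (W ^ 2) = ∫ ω, (W ω) ^ 2 ∂ℙ := by
      intro W
      congr 1
    have hESq : ∀ n : ℕ × ℕ × ℕ, ∫ ω, (Sn n ω) ^ 2 ∂ℙ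
        = variance (Sn n) ℙ + (∫ ω, Sn n ω ∂ℙ) ^ 2 := by
      intro n
      have hv := variance_eq_sub (hSnmem n)
      rw [hpow (Sn n)] at hv
      linarith [hv]
    have hSqint : ∀ n, Integrable (fun ω => (Sn n ω) ^ 2) ℙ := fun n =>
      (memLp_two_iff_integrable_sq (hSnmeas n).aestronglyMeasurable).1 (hSnmem n)
    have hpart2 := integral_partition (Fs t) A (fun n _ => hAmeas n)
      (fun ω => ((∑ i ∈ Finset.range (B1 ω), Y1 i ω + ∑ i ∈ Finset.range (B0 ω), Y3 i ω) +
             (∑ i ∈ Finset.range (B2 ω), Y2 i ω + ∑ i ∈ Finset.range (B0 ω), Y4 i ω)) ^ 2)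
      (fun n ω => (Sn n ω) ^ 2)
      (fun n _ => hIndFin n (fun x => x ^ 2) (measurable_id.pow_const 2))
      (fun n _ => hSqint n)
      (hrep _ _ (fun ω => rfl))
    have hSmem : MemLp (fun ω =>
        ((∑ i ∈ Finset.range (B1 ω), Y1 i ω + ∑ i ∈ Finset.range (B0 ω), Y3 i ω) +
         (∑ i ∈ Finset.range (B2 ω), Y2 i ω + ∑ i ∈ Finset.range (B0 ω), Y4 i ω))) 2 ℙ := by
      refine MemLp.ae_eq (hrep _ Sn (fun ω => rfl)).symm ?_
      exact memLp_finset_sum (Fs t) (fun n _ => ((hSnmem n).indicator (hAmeas n)))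
    rw [variance_eq_sub hSmem, hpow]
    rw [hpart2.2, hmeanAll int1 int2 int3 int4]
    rw [Finset.sum_congr rfl (fun n hn => by
      rw [hPn n hn, hESq n, hVarSn n, hESn n, mul_add])]
    rw [Finset.sum_add_distrib,
      lin t p0 p1 p2 (variance (fun ω => Y3 0 ω + Y4 0 ω) ℙ) (variance (Y1 0) ℙ)
        (variance (Y2 0) ℙ),
      quad t p0 p1 p2 ((∫ ω, Y3 0 ω ∂ℙ) + (∫ ω, Y4 0 ω ∂ℙ)) (∫ ω, Y1 0 ω ∂ℙ)
        (∫ ω, Y2 0 ω ∂ℙ)]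
    have hv1 : variance (Y1 0) ℙ = (∫ ω, Y1 0 ω ^ 2 ∂ℙ) - (∫ ω, Y1 0 ω ∂ℙ) ^ 2 := by
      rw [variance_eq_sub m1, hpow]
    have hv2 : variance (Y2 0) ℙ = (∫ ω, Y2 0 ω ^ 2 ∂ℙ) - (∫ ω, Y2 0 ω ∂ℙ) ^ 2 := by
      rw [variance_eq_sub m2, hpow]
    have hv34 : variance (fun ω => Y3 0 ω + Y4 0 ω) ℙ
        = (∫ ω, (Y3 0 ω + Y4 0 ω) ^ 2 ∂ℙ) - (∫ ω, (Y3 0 ω + Y4 0 ω) ∂ℙ) ^ 2 := by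
      rw [variance_eq_sub m34, hpow]
    have hi34 : ∫ ω, (Y3 0 ω + Y4 0 ω) ∂ℙ = (∫ ω, Y3 0 ω ∂ℙ) + (∫ ω, Y4 0 ω ∂ℙ) :=
      integral_add int3 int4
    rw [hv1, hv2, hv34, hi34]
    ring
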